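/- Let C and D be m×m nonnegative real matrices such that C + D is stochastic and C + D is irreducible. If D has at least one positive entry, then the spectral radius of C is strictly less than 1, and consequently the matrix I − C is invertible. -/

import Mathlib

/-!
Every row of `C ^ n` sums to at most one, and these row sums decrease with `n`. Mass leaks out of
`C` at a state `k` with `D k j > 0`. By irreducibility every state `i` reaches `k` along a walk of
`C + D`; either the walk uses only `C`-steps, and then row `i` of `C ^ (n + 1)` loses the mass
leaking at `k`, or a `D`-step on the way already made row `i` lose mass. Hence for some `N ≠ 0`
all row sums of `C ^ N` are below one, i.e. `‖C ^ N‖ < 1` in the `L∞` operator norm, and every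
eigenvalue satisfies `‖μ‖ ^ N ≤ ‖C ^ N‖ < 1`. Over `ℝ` this excludes the eigenvalue `1`.
-/

open Matrix

/-- A matrix `M` is irreducible if for every pair of indices some power has a
positive entry. -/
def MatrixIrreducible {m : ℕ} (M : Matrix (Fin m) (Fin m) ℝ) : Prop :=
  ∀ i j, ∃ n : ℕ, 0 < (M ^ n) i j

theorem spectrum.norm_lt_one_of_norm_pow_lt_one {𝕜 A : Type*} [NormedField 𝕜] [NormedRing A]
    [NormedAlgebra 𝕜 A] [CompleteSpace A] [NormOneClass A] {a : A} {N : ℕ} (hN : N ≠ 0)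
    (ha : ‖a ^ N‖ < 1) {μ : 𝕜} (hμ : μ ∈ spectrum 𝕜 a) : ‖μ‖ < 1 := by
  have : ‖μ‖ ^ N < 1 := by
    rw [← norm_pow]
    exact (spectrum.norm_le_norm_of_mem (spectrum.pow_mem_pow a N hμ)).trans_lt ha
  exact (pow_lt_one_iff_of_nonneg (norm_nonneg μ) hN).mp this

namespace Matrix

variable {ι R : Type*} [Fintype ι]

section Semiring

variable [Semiring R]

theorem sum_apply_add_sum_apply_eq_one {C D : Matrix ι ι R}
    (hstoch : (C + D) *ᵥ (fun _ => 1) = fun _ => 1) (k : ι) : ∑ j, C k j + ∑ j, D k j = 1 := by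
  simpa [mulVec, dotProduct, Finset.sum_add_distrib] using congrFun hstoch k

theorem sum_pow_succ_apply [DecidableEq ι] (A : Matrix ι ι R) (n : ℕ) (i : ι) :
    ∑ j, (A ^ (n + 1)) i j = ∑ k, (A ^ n) i k * ∑ j, A k j := by
  simp only [pow_succ, mul_apply, Finset.mul_sum]
  exact Finset.sum_comm

end Semiring

section Substochastic

variable [CommRing R] [LinearOrder R] [IsStrictOrderedRing R] {C D : Matrix ι ι R}

theorem exists_pos_of_mul_apply_pos {A B : Matrix ι ι R} (hA : ∀ i j, 0 ≤ A i j)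
    (hB : ∀ i j, 0 ≤ B i j) {i j : ι} (h : 0 < (A * B) i j) : ∃ k, 0 < A i k ∧ 0 < B k j := by
  rw [mul_apply, Finset.sum_pos_iff_of_nonneg fun k _ => mul_nonneg (hA i k) (hB k j)] at h
  obtain ⟨k, -, hk⟩ := h
  exact ⟨k, (hA i k).lt_of_ne (by rintro h; simp [← h] at hk),
    (hB k j).lt_of_ne (by rintro h; simp [← h] at hk)⟩

theorem sum_apply_le_one (hD : ∀ i j, 0 ≤ D i j)
    (hstoch : (C + D) *ᵥ (fun _ => 1) = fun _ => 1) (k : ι) : ∑ j, C k j ≤ 1 := by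
  have := sum_apply_add_sum_apply_eq_one hstoch k
  have := Finset.sum_nonneg fun j (_ : j ∈ Finset.univ) => hD k j
  linarith

theorem sum_apply_lt_one_of_pos (hD : ∀ i j, 0 ≤ D i j)
    (hstoch : (C + D) *ᵥ (fun _ => 1) = fun _ => 1) {k j : ι} (hkj : 0 < D k j) :
    ∑ j, C k j < 1 := by
  have := sum_apply_add_sum_apply_eq_one hstoch k
  have := Finset.single_le_sum (fun j _ => hD k j) (Finset.mem_univ j)
  linarith

variable [DecidableEq ι]

theorem sum_pow_succ_apply_le (hC : ∀ i j, 0 ≤ C i j) (hsub : ∀ k, ∑ j, C k j ≤ 1) (n : ℕ)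
    (i : ι) : ∑ j, (C ^ (n + 1)) i j ≤ ∑ j, (C ^ n) i j := by
  rw [sum_pow_succ_apply]
  exact Finset.sum_le_sum fun k _ => mul_le_of_le_one_right (pow_apply_nonneg hC n i k) (hsub k)

theorem antitone_sum_pow_apply (hC : ∀ i j, 0 ≤ C i j) (hsub : ∀ k, ∑ j, C k j ≤ 1) (i : ι) :
    Antitone fun n => ∑ j, (C ^ n) i j :=
  antitone_nat_of_succ_le fun n => sum_pow_succ_apply_le hC hsub n i

theorem sum_pow_apply_le_one (hC : ∀ i j, 0 ≤ C i j) (hsub : ∀ k, ∑ j, C k j ≤ 1) (n : ℕ)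
    (i : ι) : ∑ j, (C ^ n) i j ≤ 1 := by
  simpa [one_apply] using antitone_sum_pow_apply hC hsub i (Nat.zero_le n)

theorem sum_pow_succ_apply_lt_one (hC : ∀ i j, 0 ≤ C i j) (hsub : ∀ k, ∑ j, C k j ≤ 1)
    {n : ℕ} {i k : ι} (hik : 0 < (C ^ n) i k) (hk : ∑ j, C k j < 1) :
    ∑ j, (C ^ (n + 1)) i j < 1 := by
  refine lt_of_lt_of_le ?_ (sum_pow_apply_le_one hC hsub n i)
  rw [sum_pow_succ_apply]
  conv_rhs => enter [2, l]; rw [← mul_one ((C ^ n) i l)]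
  refine Finset.sum_lt_sum (fun l _ => ?_) ⟨k, Finset.mem_univ k, mul_lt_mul_of_pos_left hk hik⟩
  exact mul_le_mul_of_nonneg_left (hsub l) (pow_apply_nonneg hC n i l)

theorem pow_apply_pos_or_sum_pow_apply_lt_one (hC : ∀ i j, 0 ≤ C i j) (hD : ∀ i j, 0 ≤ D i j)
    (hstoch : (C + D) *ᵥ (fun _ => 1) = fun _ => 1) {n : ℕ} {i j : ι}
    (h : 0 < ((C + D) ^ n) i j) : 0 < (C ^ n) i j ∨ ∑ l, (C ^ n) i l < 1 := by
  have hCD : ∀ i j, 0 ≤ (C + D) i j := fun i j => add_nonneg (hC i j) (hD i j)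
  have hsub := sum_apply_le_one hD hstoch
  induction n generalizing j with
  | zero => exact .inl (by simpa using h)
  | succ n ih =>
    rw [pow_succ] at h
    obtain ⟨k, hik, hkj⟩ := exists_pos_of_mul_apply_pos (pow_apply_nonneg hCD n) hCD h
    rcases ih hik with hCik | hleak
    · rcases (hC k j).lt_or_eq with hCkj | hCkj
      · left
        rw [pow_succ, mul_apply]
        exact Finset.sum_pos' (fun l _ => mul_nonneg (pow_apply_nonneg hC n i l) (hC l j))
          ⟨k, Finset.mem_univ k, mul_pos hCik hCkj⟩
      · have hDkj : 0 < D k j := by simpa [← hCkj] using hkj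
        exact .inr <|
          sum_pow_succ_apply_lt_one hC hsub hCik (sum_apply_lt_one_of_pos hD hstoch hDkj)
    · exact .inr ((sum_pow_succ_apply_le hC hsub n i).trans_lt hleak)

theorem exists_pow_sum_apply_lt_one (hC : ∀ i j, 0 ≤ C i j) (hD : ∀ i j, 0 ≤ D i j)
    (hstoch : (C + D) *ᵥ (fun _ => 1) = fun _ => 1) {k j : ι} (hkj : 0 < D k j)
    (hreach : ∀ i, ∃ n, 0 < ((C + D) ^ n) i k) : ∃ N ≠ 0, ∀ i, ∑ j, (C ^ N) i j < 1 := by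
  have hsub := sum_apply_le_one hD hstoch
  have hleak : ∀ i, ∃ n, ∑ j, (C ^ n) i j < 1 := fun i => by
    obtain ⟨n, hn⟩ := hreach i
    rcases pow_apply_pos_or_sum_pow_apply_lt_one hC hD hstoch hn with hik | hlt
    · exact ⟨n + 1, sum_pow_succ_apply_lt_one hC hsub hik (sum_apply_lt_one_of_pos hD hstoch hkj)⟩
    · exact ⟨n, hlt⟩
  choose n hn using hleak
  refine ⟨Finset.univ.sup n + 1, Nat.succ_ne_zero _, fun i => ?_⟩
  refine lt_of_le_of_lt (antitone_sum_pow_apply hC hsub i ?_) (hn i)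
  exact (Finset.le_sup (Finset.mem_univ i)).trans (Nat.le_succ _)

end Substochastic

section LinftyOpNorm

attribute [local instance] Matrix.linftyOpSeminormedAddCommGroup Matrix.linftyOpNormedRing
  Matrix.linftyOpNormedAlgebra

theorem linfty_opNorm_lt_one {m n α : Type*} [Fintype m] [Fintype n] [SeminormedAddCommGroup α]
    {A : Matrix m n α} (h : ∀ i, ∑ j, ‖A i j‖ < 1) : ‖A‖ < 1 := by
  rw [linfty_opNorm_def, ← NNReal.coe_one, NNReal.coe_lt_coe, Finset.sup_lt_iff one_pos]
  exact fun i _ => NNReal.coe_lt_coe.mp (by simpa using h i)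

theorem norm_lt_one_of_mem_spectrum {𝕜 : Type*} [NontriviallyNormedField 𝕜] [CompleteSpace 𝕜]
    [DecidableEq ι] [Nonempty ι] {A : Matrix ι ι 𝕜} {N : ℕ} (hN : N ≠ 0)
    (hA : ∀ i, ∑ j, ‖(A ^ N) i j‖ < 1) {μ : 𝕜} (hμ : μ ∈ spectrum 𝕜 A) : ‖μ‖ < 1 := by
  -- The global uniform structure on matrices is not the one of the local `L∞` instances.
  have : @CompleteSpace (Matrix ι ι 𝕜) PseudoMetricSpace.toUniformSpace :=
    FiniteDimensional.complete 𝕜 _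
  exact spectrum.norm_lt_one_of_norm_pow_lt_one hN (linfty_opNorm_lt_one hA) hμ

end LinftyOpNorm

end Matrix

/-- If `C + D` is an irreducible stochastic matrix and `D ≠ 0`, then the spectral
radius of `C` is strictly less than `1`, and `I - C` is invertible. -/
theorem stmt_1 (m : ℕ) (C D : Matrix (Fin m) (Fin m) ℝ)
    (hC : ∀ i j, 0 ≤ C i j) (hD : ∀ i j, 0 ≤ D i j)
    (hstoch : (C + D) *ᵥ (fun _ => (1 : ℝ)) = fun _ => 1)
    (hirr : MatrixIrreducible (C + D))
    (hDpos : ∃ i j, 0 < D i j) :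
    (∀ μ ∈ spectrum ℂ (C.map (Complex.ofReal ·)), ‖μ‖ < 1) ∧
      IsUnit ((1 : Matrix (Fin m) (Fin m) ℝ) - C) := by
  obtain ⟨k, j, hkj⟩ := hDpos
  have : Nonempty (Fin m) := ⟨k⟩
  obtain ⟨N, hN, hrow⟩ := exists_pow_sum_apply_lt_one hC hD hstoch hkj (hirr · k)
  have hnorm : ∀ i, ∑ j, ‖(C ^ N) i j‖ < 1 := fun i => by
    simpa only [Real.norm_of_nonneg (pow_apply_nonneg hC N i _)] using hrow i
  refine ⟨fun μ hμ => norm_lt_one_of_mem_spectrum hN (fun i => ?_) hμ, ?_⟩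
  · have hpow : C.map (Complex.ofReal ·) ^ N = (C ^ N).map (Complex.ofReal ·) :=
      (C.map_pow Complex.ofRealHom N).symm
    simpa only [hpow, map_apply, Complex.norm_real] using hnorm i
  · have h1 : (1 : ℝ) ∉ spectrum ℝ C := fun h =>
      (norm_lt_one_of_mem_spectrum hN hnorm h).ne norm_one
    simpa using spectrum.notMem_iff.mp h1
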